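/- arXiv:math-ph/0105017 — 3 statements merged into one kernel-verified Lean document; each statement's English description precedes it below -/
import Mathlib

section
/- The function Φ belongs to C¹([0,∞)), is strictly convex, and satisfies Φ(0) = Φ'(0) = 0. -/
open MeasureTheory Real Filter Topology

noncomputable section

abbrev Space : Type := EuclideanSpace ℝ (Fin 3)
abbrev Phase : Type := Space × Space

/-- Spatial density induced by a phase-space density. -/
def rho (f : Phase → ℝ) : Space → ℝ := fun x => ∫ v : Space, f (x, v)

/-- Induced gravitational potential `U_ρ = -ρ ∗ 1/|·|`. -/
def Upot (ρ : Space → ℝ) : Space → ℝ := fun x => - ∫ y : Space, ρ y / ‖x - y‖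

/-- Kinetic energy. -/
def Ekin (f : Phase → ℝ) : ℝ := (1/2) * ∫ p : Phase, ‖p.2‖^2 * f p

/-- Casimir functional. -/
def Cas (Q : ℝ → ℝ) (f : Phase → ℝ) : ℝ := ∫ p : Phase, Q (f p)

/-- Potential energy. -/
def Epot (ρ : Space → ℝ) : ℝ :=
  -(1/2) * ∫ x : Space, ∫ y : Space, ρ x * ρ y / ‖x - y‖

/-- Energy-Casimir functional. -/
def HC (Q : ℝ → ℝ) (f : Phase → ℝ) : ℝ := Cas Q f + Ekin f + Epot (rho f)

/-- The constraint set `F_M`. -/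
def FM (Q : ℝ → ℝ) (M : ℝ) : Set (Phase → ℝ) :=
  {f | (∀ p, 0 ≤ f p) ∧ Integrable f ∧
       Integrable (fun p : Phase => Q (f p) + (1/2) * ‖p.2‖^2 * f p) ∧
       MemLp (rho f) (ENNReal.ofReal (6/5)) ∧
       (∫ p : Phase, f p) = M}

/-- `∫ ((1/2)|v|² g(v) + Q(g(v))) dv`. -/
def kinQint (Q : ℝ → ℝ) (g : Space → ℝ) : ℝ :=
  ∫ v : Space, ((1/2) * ‖v‖^2 * g v + Q (g v))

/-- The set `G_r`. -/
def Gset (Q : ℝ → ℝ) (r : ℝ) : Set (Space → ℝ) :=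
  {g | (∀ v, 0 ≤ g v) ∧ Integrable g ∧
       Integrable (fun v => (1/2) * ‖v‖^2 * g v + Q (g v)) ∧
       (∫ v : Space, g v) = r}

/-- The reduced integrand `Φ(r) = inf_{g ∈ G_r} ∫ ((1/2)|v|² g + Q(g))`. -/
def Phi (Q : ℝ → ℝ) (r : ℝ) : ℝ := sInf (kinQint Q '' Gset Q r)

/-- The reduced energy-Casimir functional. -/
def HCr (Q : ℝ → ℝ) (ρ : Space → ℝ) : ℝ := (∫ x : Space, Phi Q (ρ x)) + Epot ρ

/-- Assumptions on `Q`: `Q ∈ C¹([0,∞))` with derivative `Q'`, strictly convex,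
`Q(0) = Q'(0) = 0`, and `Q(f)/f → ∞` as `f → ∞`. -/
structure QHyp (Q Q' : ℝ → ℝ) : Prop where
  hasDeriv : ∀ r ∈ Set.Ici (0:ℝ), HasDerivWithinAt Q (Q' r) (Set.Ici 0) r
  contDeriv : ContinuousOn Q' (Set.Ici 0)
  strictConvex : StrictConvexOn ℝ (Set.Ici 0) Q
  zero : Q 0 = 0
  derivZero : Q' 0 = 0
  superlinear : Tendsto (fun f => Q f / f) atTop atTop

/-!
For `λ ∈ ℝ` let `g_λ(v) = (Q')⁻¹((λ - |v|²/2)₊)`. Young's inequality for `Q` and its Legendre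
transform `Q*` gives, for every `g ∈ G_r`,
`∫ (|v|²/2 g + Q(g)) ≥ λ r - h(λ)` with `h(λ) = ∫ Q*((λ - |v|²/2)₊) dv`,
with equality for `g = g_λ` when `r = ∫ g_λ`. The mass `λ ↦ ∫ g_λ` is continuous, vanishes for
`λ ≤ 0` and increases strictly from `0` to `∞` on `[0, ∞)`, so it has a continuous strictly
increasing inverse `λ(r)` with `λ(0) = 0`, and `Φ(r) = λ(r) r - h(λ(r)) = max_λ (λ r - h(λ))`.
Thus `λ(x)` is a subgradient of `Φ` at every `x ≥ 0`; a continuous strictly increasing choice of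
subgradients is the derivative, so `Φ' = λ` is continuous and `Φ` is strictly convex.
-/

open Set Function

section Subgradient

variable {f L : ℝ → ℝ} {s : Set ℝ}

theorem hasDerivWithinAt_of_subgradient (hsub : ∀ x ∈ s, ∀ y ∈ s, L x * (y - x) ≤ f y - f x)
    {r : ℝ} (hr : r ∈ s) (hL : ContinuousWithinAt L s r) : HasDerivWithinAt f (L r) s r := by
  rw [hasDerivWithinAt_iff_isLittleO]
  have hbound : ∀ᶠ x in 𝓝[s] r, ‖f x - f r - (x - r) • L r‖ ≤ ‖(L x - L r) * (x - r)‖ := by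
    filter_upwards [self_mem_nhdsWithin] with x hx
    have h1 := hsub r hr x hx
    have h2 := hsub x hx r hr
    rw [smul_eq_mul, Real.norm_eq_abs, abs_of_nonneg (by linarith)]
    exact (by linarith : f x - f r - (x - r) * L r ≤ (L x - L r) * (x - r)).trans
      (Real.le_norm_self _)
  have hsmall : (fun x => L x - L r) =o[𝓝[s] r] fun _ => (1 : ℝ) :=
    (Asymptotics.isLittleO_one_iff ℝ).2 (tendsto_sub_nhds_zero_iff.2 hL)
  refine (Asymptotics.IsBigO.of_bound' hbound).trans_isLittleO ?_
  simpa using hsmall.mul_isBigO (Asymptotics.isBigO_refl (fun x => x - r) _)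

theorem StrictMonoOn.strictConvexOn_of_subgradient (hs : Convex ℝ s) (hL : StrictMonoOn L s)
    (hsub : ∀ x ∈ s, ∀ y ∈ s, L x * (y - x) ≤ f y - f x) : StrictConvexOn ℝ s f := by
  refine strictConvexOn_of_slope_strict_mono_adjacent hs fun {x y z} hx hz hxy hyz => ?_
  have hy : y ∈ s := hs.ordConnected.out hx hz ⟨hxy.le, hyz.le⟩
  -- the subgradient at a point `m ∈ (x, y)` is strictly below `L y`, which makes the first
  -- slope strictly smaller than `L y`
  obtain ⟨m, hxm, hmy⟩ := exists_between hxy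
  have hm : m ∈ s := hs.ordConnected.out hx hy ⟨hxm.le, hmy.le⟩
  have hLm : L m * (m - x) < L y * (m - x) :=
    mul_lt_mul_of_pos_right (hL hm hy (by linarith)) (by linarith)
  have hxm := hsub m hm x hx
  have hmy := hsub y hy m hm
  have hyz' := hsub y hy z hz
  calc (f y - f x) / (y - x) < L y := (div_lt_iff₀ (by linarith)).2 (by linarith)
    _ ≤ (f z - f y) / (z - y) := (le_div_iff₀ (by linarith)).2 (by linarith)

end Subgradient

section InvIci

/-- Continued with slope one to the left of `0`, a continuous function increasing strictly from
`f 0` to `∞` on `[0, ∞)` becomes an order automorphism of `ℝ`. -/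
def extendIci (f : ℝ → ℝ) (t : ℝ) : ℝ := f (max t 0) + min t 0

variable {f : ℝ → ℝ}

theorem extendIci_of_nonneg {t : ℝ} (ht : 0 ≤ t) : extendIci f t = f t := by
  simp [extendIci, ht]

theorem strictMono_extendIci (hf : StrictMonoOn f (Ici 0)) : StrictMono (extendIci f) := by
  intro s t hst
  have hmin : min s 0 ≤ min t 0 := min_le_min hst.le le_rfl
  have hmax : f (max s 0) ≤ f (max t 0) :=
    hf.monotoneOn (le_max_right s 0) (le_max_right t 0) (max_le_max hst.le le_rfl)
  rcases le_or_gt t 0 with ht | ht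
  · have : min s 0 < min t 0 := by simpa [ht, (hst.trans_le ht).le] using hst
    simp only [extendIci]
    linarith
  · have : f (max s 0) < f (max t 0) :=
      hf (le_max_right s 0) (le_max_right t 0) (by simpa [ht.le] using ⟨hst, ht⟩)
    simp only [extendIci]
    linarith

theorem continuous_extendIci (hf : ContinuousOn f (Ici 0)) : Continuous (extendIci f) :=
  (hf.comp_continuous (continuous_id.max continuous_const) fun t => le_max_right t 0).add
    (continuous_id.min continuous_const)

theorem surjective_extendIci (hc : ContinuousOn f (Ici 0)) (htop : Tendsto f atTop atTop) :
    Surjective (extendIci f) := by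
  refine (continuous_extendIci hc).surjective ?_ ?_
  · refine htop.congr' ?_
    filter_upwards [eventually_ge_atTop 0] with t ht
    exact (extendIci_of_nonneg ht).symm
  · refine (tendsto_atBot_add_const_left _ (f 0) tendsto_id).congr' ?_
    filter_upwards [eventually_le_atBot 0] with t ht
    simp [extendIci, ht]

variable (hc : ContinuousOn f (Ici 0)) (hm : StrictMonoOn f (Ici 0))
  (htop : Tendsto f atTop atTop)

def invIci : ℝ ≃o ℝ :=
  (StrictMono.orderIsoOfSurjective _ (strictMono_extendIci hm)
    (surjective_extendIci hc htop)).symm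

theorem invIci_eq_iff {s t : ℝ} : invIci hc hm htop s = t ↔ s = extendIci f t :=
  (invIci hc hm htop).eq_symm_apply.symm

variable {hc hm htop}

theorem invIci_zero (h0 : f 0 = 0) : invIci hc hm htop 0 = 0 := by
  rw [invIci_eq_iff, extendIci_of_nonneg le_rfl, h0]

theorem invIci_nonneg (h0 : f 0 = 0) {s : ℝ} (hs : 0 ≤ s) : 0 ≤ invIci hc hm htop s :=
  invIci_zero h0 ▸ (invIci hc hm htop).monotone hs

theorem apply_invIci (h0 : f 0 = 0) {s : ℝ} (hs : 0 ≤ s) : f (invIci hc hm htop s) = s := by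
  rw [← extendIci_of_nonneg (f := f) (invIci_nonneg h0 hs), eq_comm, ← invIci_eq_iff]

end InvIci

section Excess

variable {E : Type*} [SeminormedAddCommGroup E]

def excess (lam : ℝ) (v : E) : ℝ := max (lam - (1/2) * ‖v‖^2) 0

theorem excess_nonneg (lam : ℝ) (v : E) : 0 ≤ excess lam v := le_max_right _ _

theorem excess_of_nonpos {lam : ℝ} (hlam : lam ≤ 0) (v : E) : excess lam v = 0 :=
  max_eq_right (by nlinarith [sq_nonneg ‖v‖])

theorem excess_zero_right (lam : ℝ) : excess lam (0 : E) = max lam 0 := by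
  simp [excess]

theorem monotone_excess (v : E) : Monotone fun lam => excess lam v :=
  fun _ _ h => max_le_max (by linarith) le_rfl

theorem continuous_excess (lam : ℝ) : Continuous (excess (E := E) lam) := by
  unfold excess
  fun_prop

theorem continuous_excess_left (v : E) : Continuous fun lam => excess lam v := by
  unfold excess
  fun_prop

theorem hasCompactSupport_excess [ProperSpace E] (lam : ℝ) :
    HasCompactSupport (excess (E := E) lam) := by
  refine HasCompactSupport.intro (isCompact_closedBall 0 (max 1 (2 * lam))) fun v hv => ?_
  rw [Metric.mem_closedBall, dist_zero_right, not_le, max_lt_iff] at hv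
  exact max_eq_right (by nlinarith)

end Excess

namespace QHyp

variable {Q Q' : ℝ → ℝ}

theorem continuousOn (hQ : QHyp Q Q') : ContinuousOn Q (Ici 0) :=
  fun x hx => (hQ.hasDeriv x hx).continuousWithinAt

theorem strictMonoOn_deriv (hQ : QHyp Q Q') : StrictMonoOn Q' (Ici 0) := fun x hx y hy hxy =>
  (hQ.strictConvex.lt_slope_of_hasDerivWithinAt hx hy hxy (hQ.hasDeriv x hx)).trans
    (hQ.strictConvex.slope_lt_of_hasDerivWithinAt hx hy hxy (hQ.hasDeriv y hy))

theorem add_deriv_mul_sub_le (hQ : QHyp Q Q') {x y : ℝ} (hx : 0 ≤ x) (hy : 0 ≤ y) :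
    Q x + Q' x * (y - x) ≤ Q y := by
  rcases lt_trichotomy x y with h | rfl | h
  · have := hQ.strictConvex.convexOn.le_slope_of_hasDerivWithinAt hx hy h (hQ.hasDeriv x hx)
    rw [slope_def_field, le_div_iff₀ (by linarith)] at this
    linarith
  · simp
  · have := hQ.strictConvex.convexOn.slope_le_of_hasDerivWithinAt hy hx h (hQ.hasDeriv x hx)
    rw [slope_def_field, div_le_iff₀ (by linarith)] at this
    linarith

theorem tendsto_deriv_atTop (hQ : QHyp Q Q') : Tendsto Q' atTop atTop := by
  refine tendsto_atTop_mono' _ ?_ hQ.superlinear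
  filter_upwards [eventually_gt_atTop 0] with t ht
  have := hQ.add_deriv_mul_sub_le ht.le le_rfl
  rw [hQ.zero] at this
  rw [div_le_iff₀ ht]
  linarith

def derivInv (hQ : QHyp Q Q') : ℝ ≃o ℝ :=
  invIci hQ.contDeriv hQ.strictMonoOn_deriv hQ.tendsto_deriv_atTop

theorem derivInv_zero (hQ : QHyp Q Q') : hQ.derivInv 0 = 0 :=
  invIci_zero hQ.derivZero

theorem derivInv_nonneg (hQ : QHyp Q Q') {s : ℝ} (hs : 0 ≤ s) : 0 ≤ hQ.derivInv s :=
  invIci_nonneg hQ.derivZero hs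

theorem deriv_derivInv (hQ : QHyp Q Q') {s : ℝ} (hs : 0 ≤ s) : Q' (hQ.derivInv s) = s :=
  apply_invIci hQ.derivZero hs

/-- For `s ≥ 0`, the Legendre transform `Q*(s) = sup_{t ≥ 0} (s t - Q t)`, attained at
`t = (Q')⁻¹ s`. -/
def conjugate (hQ : QHyp Q Q') (s : ℝ) : ℝ := s * hQ.derivInv s - Q (hQ.derivInv s)

theorem conjugate_zero (hQ : QHyp Q Q') : hQ.conjugate 0 = 0 := by
  simp [conjugate, hQ.derivInv_zero, hQ.zero]

theorem continuousOn_conjugate (hQ : QHyp Q Q') : ContinuousOn hQ.conjugate (Ici 0) :=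
  (continuous_id.mul hQ.derivInv.continuous).continuousOn.sub
    (hQ.continuousOn.comp hQ.derivInv.continuous.continuousOn fun _ hs => hQ.derivInv_nonneg hs)

theorem mul_le_add_conjugate (hQ : QHyp Q Q') {s t : ℝ} (hs : 0 ≤ s) (ht : 0 ≤ t) :
    s * t ≤ Q t + hQ.conjugate s := by
  have := hQ.add_deriv_mul_sub_le (hQ.derivInv_nonneg hs) ht
  rw [hQ.deriv_derivInv hs] at this
  rw [conjugate]
  linarith

/-- The minimiser `g_λ(v) = (Q')⁻¹((λ - |v|²/2)₊)` of the kinetic-Casimir energy at mass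
`∫ g_λ`. -/
def profile (hQ : QHyp Q Q') (lam : ℝ) (v : Space) : ℝ := hQ.derivInv (excess lam v)

def mass (hQ : QHyp Q Q') (lam : ℝ) : ℝ := ∫ v, hQ.profile lam v

def dualEnergy (hQ : QHyp Q Q') (lam : ℝ) : ℝ := ∫ v : Space, hQ.conjugate (excess lam v)

theorem profile_nonneg (hQ : QHyp Q Q') (lam : ℝ) (v : Space) : 0 ≤ hQ.profile lam v :=
  hQ.derivInv_nonneg (excess_nonneg lam v)

theorem monotone_profile (hQ : QHyp Q Q') (v : Space) : Monotone fun lam => hQ.profile lam v :=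
  hQ.derivInv.monotone.comp (monotone_excess v)

theorem continuous_profile (hQ : QHyp Q Q') (lam : ℝ) : Continuous (hQ.profile lam) :=
  hQ.derivInv.continuous.comp (continuous_excess lam)

theorem hasCompactSupport_profile (hQ : QHyp Q Q') (lam : ℝ) :
    HasCompactSupport (hQ.profile lam) :=
  (hasCompactSupport_excess lam).comp_left hQ.derivInv_zero

theorem integrable_profile (hQ : QHyp Q Q') (lam : ℝ) : Integrable (hQ.profile lam) :=
  (hQ.continuous_profile lam).integrable_of_hasCompactSupport (hQ.hasCompactSupport_profile lam)

theorem integrable_conjugate_excess (hQ : QHyp Q Q') (lam : ℝ) :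
    Integrable fun v : Space => hQ.conjugate (excess lam v) :=
  (hQ.continuousOn_conjugate.comp_continuous (continuous_excess lam) (excess_nonneg lam)
    ).integrable_of_hasCompactSupport ((hasCompactSupport_excess lam).comp_left hQ.conjugate_zero)

theorem kinetic_add_profile (hQ : QHyp Q Q') (lam : ℝ) (v : Space) :
    (1/2) * ‖v‖^2 * hQ.profile lam v + Q (hQ.profile lam v) =
      lam * hQ.profile lam v - hQ.conjugate (excess lam v) := by
  have h : excess lam v * hQ.profile lam v = (lam - (1/2) * ‖v‖^2) * hQ.profile lam v := by
    rcases le_total (lam - (1/2) * ‖v‖^2) 0 with hle | hle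
    · rw [profile, excess, max_eq_right hle, hQ.derivInv_zero, zero_mul, mul_zero]
    · rw [excess, max_eq_left hle]
  rw [conjugate, ← profile, h]
  ring

theorem profile_mem_Gset (hQ : QHyp Q Q') (lam : ℝ) : hQ.profile lam ∈ Gset Q (hQ.mass lam) := by
  refine ⟨hQ.profile_nonneg lam, hQ.integrable_profile lam, ?_, rfl⟩
  simp_rw [hQ.kinetic_add_profile lam]
  exact ((hQ.integrable_profile lam).const_mul lam).sub (hQ.integrable_conjugate_excess lam)

theorem kinQint_profile (hQ : QHyp Q Q') (lam : ℝ) :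
    kinQint Q (hQ.profile lam) = lam * hQ.mass lam - hQ.dualEnergy lam := by
  simp_rw [kinQint, hQ.kinetic_add_profile lam]
  rw [integral_sub ((hQ.integrable_profile lam).const_mul lam) (hQ.integrable_conjugate_excess lam),
    integral_const_mul, mass, dualEnergy]

/-- Young's inequality `(λ - |v|²/2) g ≤ Q(g) + Q*((λ - |v|²/2)₊)`, integrated over `v`. -/
theorem sub_dualEnergy_le_kinQint (hQ : QHyp Q Q') {r : ℝ} {g : Space → ℝ} (hg : g ∈ Gset Q r)
    (lam : ℝ) : lam * r - hQ.dualEnergy lam ≤ kinQint Q g := by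
  obtain ⟨hg0, hgi, hgki, rfl⟩ := hg
  have hpt (v : Space) :
      lam * g v - hQ.conjugate (excess lam v) ≤ (1/2) * ‖v‖^2 * g v + Q (g v) := by
    have hyoung := hQ.mul_le_add_conjugate (excess_nonneg lam v) (hg0 v)
    have hexcess : (lam - (1/2) * ‖v‖^2) * g v ≤ excess lam v * g v :=
      mul_le_mul_of_nonneg_right (le_max_left _ _) (hg0 v)
    linarith
  calc (lam * ∫ v, g v) - hQ.dualEnergy lam
      = ∫ v, (lam * g v - hQ.conjugate (excess lam v)) := by
        rw [integral_sub (hgi.const_mul lam) (hQ.integrable_conjugate_excess lam),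
          integral_const_mul, dualEnergy]
    _ ≤ kinQint Q g :=
        integral_mono ((hgi.const_mul lam).sub (hQ.integrable_conjugate_excess lam)) hgki hpt

theorem mass_of_nonpos (hQ : QHyp Q Q') {lam : ℝ} (hlam : lam ≤ 0) : hQ.mass lam = 0 := by
  simp [mass, profile, excess_of_nonpos hlam, hQ.derivInv_zero]

theorem continuous_mass (hQ : QHyp Q Q') : Continuous hQ.mass := by
  refine continuous_iff_continuousAt.2 fun lam₀ => continuousAt_of_dominated
    (bound := hQ.profile (lam₀ + 1))
    (Eventually.of_forall fun lam => (hQ.continuous_profile lam).aestronglyMeasurable) ?_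
    (hQ.integrable_profile _)
    (Eventually.of_forall fun v =>
      (hQ.derivInv.continuous.comp (continuous_excess_left v)).continuousAt)
  filter_upwards [eventually_le_nhds (lt_add_one lam₀)] with lam hlam
  refine Eventually.of_forall fun v => ?_
  rw [norm_of_nonneg (hQ.profile_nonneg lam v)]
  exact hQ.monotone_profile v hlam

theorem strictMonoOn_mass (hQ : QHyp Q Q') : StrictMonoOn hQ.mass (Ici 0) := by
  intro l₁ h₁ l₂ _ hl
  have hgap : 0 < ∫ v, (hQ.profile l₂ v - hQ.profile l₁ v) := by
    refine ((hQ.continuous_profile l₂).sub (hQ.continuous_profile l₁)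
      ).integral_pos_of_hasCompactSupport_nonneg_nonzero (x := 0)
      ((hQ.hasCompactSupport_profile l₂).sub (hQ.hasCompactSupport_profile l₁))
      (fun v => sub_nonneg.2 (hQ.monotone_profile v hl.le)) (sub_ne_zero.2 ?_)
    refine (hQ.derivInv.strictMono ?_).ne'
    rw [excess_zero_right, excess_zero_right, max_eq_left (le_of_lt (h₁.trans_lt hl)),
      max_eq_left h₁]
    exact hl
  rw [integral_sub (hQ.integrable_profile l₂) (hQ.integrable_profile l₁)] at hgap
  exact sub_pos.1 hgap

theorem tendsto_mass_atTop (hQ : QHyp Q Q') : Tendsto hQ.mass atTop atTop := by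
  set B := Metric.closedBall (0 : Space) 1
  have hB : 0 < volume.real B :=
    ENNReal.toReal_pos (Metric.measure_closedBall_pos volume 0 one_pos).ne'
      measure_closedBall_lt_top.ne
  -- on the unit ball the excess is at least `λ - 1/2`
  have hlow (lam : ℝ) : volume.real B * hQ.derivInv (lam - 1/2) ≤ hQ.mass lam := by
    have hle : B.indicator (fun _ => hQ.derivInv (lam - 1/2)) ≤ hQ.profile lam := by
      intro v
      by_cases hv : v ∈ B
      · rw [indicator_of_mem hv]
        have : ‖v‖ ≤ 1 := by simpa [B] using hv
        refine hQ.derivInv.monotone ((?_ : lam - 1/2 ≤ _).trans (le_max_left _ _))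
        nlinarith [norm_nonneg v]
      · rw [indicator_of_notMem hv]
        exact hQ.profile_nonneg lam v
    have hint : Integrable (B.indicator fun _ => hQ.derivInv (lam - 1/2)) :=
      (integrable_indicator_iff measurableSet_closedBall).2
        (integrableOn_const measure_closedBall_lt_top.ne)
    have := integral_mono hint (hQ.integrable_profile lam) hle
    rwa [integral_indicator_const _ measurableSet_closedBall, smul_eq_mul] at this
  refine tendsto_atTop_mono hlow (Tendsto.const_mul_atTop hB ?_)
  exact hQ.derivInv.tendsto_atTop.comp (tendsto_atTop_add_const_right _ _ tendsto_id)

/-- The Lagrange multiplier `λ(r)` of the mass constraint, `∫ g_{λ(r)} = r`. -/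
def multiplier (hQ : QHyp Q Q') : ℝ ≃o ℝ :=
  invIci hQ.continuous_mass.continuousOn hQ.strictMonoOn_mass hQ.tendsto_mass_atTop

theorem multiplier_zero (hQ : QHyp Q Q') : hQ.multiplier 0 = 0 :=
  invIci_zero (hQ.mass_of_nonpos le_rfl)

theorem mass_multiplier (hQ : QHyp Q Q') {r : ℝ} (hr : 0 ≤ r) : hQ.mass (hQ.multiplier r) = r :=
  apply_invIci (hQ.mass_of_nonpos le_rfl) hr

theorem isLeast_kinQint (hQ : QHyp Q Q') {r : ℝ} (hr : 0 ≤ r) :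
    IsLeast (kinQint Q '' Gset Q r)
      (hQ.multiplier r * r - hQ.dualEnergy (hQ.multiplier r)) := by
  refine ⟨⟨hQ.profile (hQ.multiplier r), ?_, ?_⟩, ?_⟩
  · simpa [hQ.mass_multiplier hr] using hQ.profile_mem_Gset (hQ.multiplier r)
  · rw [kinQint_profile, hQ.mass_multiplier hr]
  · rintro _ ⟨g, hg, rfl⟩
    exact hQ.sub_dualEnergy_le_kinQint hg _

theorem Phi_eq (hQ : QHyp Q Q') {r : ℝ} (hr : 0 ≤ r) :
    Phi Q r = hQ.multiplier r * r - hQ.dualEnergy (hQ.multiplier r) :=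
  (hQ.isLeast_kinQint hr).csInf_eq

theorem sub_dualEnergy_le_Phi (hQ : QHyp Q Q') {r : ℝ} (hr : 0 ≤ r) (lam : ℝ) :
    lam * r - hQ.dualEnergy lam ≤ Phi Q r := by
  obtain ⟨⟨g, hg, hgPhi⟩, -⟩ := hQ.isLeast_kinQint hr
  rw [Phi_eq hQ hr, ← hgPhi]
  exact hQ.sub_dualEnergy_le_kinQint hg lam

/-- `Φ(r) = max_λ (λ r - dualEnergy λ)` with the maximum attained at `λ(r)`. -/
theorem multiplier_mul_sub_le_Phi_sub (hQ : QHyp Q Q') {x y : ℝ} (hx : 0 ≤ x) (hy : 0 ≤ y) :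
    hQ.multiplier x * (y - x) ≤ Phi Q y - Phi Q x := by
  have := hQ.sub_dualEnergy_le_Phi hy (hQ.multiplier x)
  rw [hQ.Phi_eq hx]
  linarith

theorem Phi_zero (hQ : QHyp Q Q') : Phi Q 0 = 0 := by
  simp [hQ.Phi_eq le_rfl, multiplier_zero, dualEnergy, excess_of_nonpos, conjugate_zero]

end QHyp

/-- `Φ ∈ C¹([0,∞))`, `Φ` is strictly convex on `[0,∞)`, and
`Φ(0) = Φ'(0) = 0`. -/
theorem Phi_C1_strictConvex (Q Q' : ℝ → ℝ) (hQ : QHyp Q Q') :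
    (∃ Φ' : ℝ → ℝ,
      (∀ r ∈ Set.Ici (0:ℝ), HasDerivWithinAt (Phi Q) (Φ' r) (Set.Ici 0) r) ∧
      ContinuousOn Φ' (Set.Ici 0) ∧ Φ' 0 = 0) ∧
    StrictConvexOn ℝ (Set.Ici 0) (Phi Q) ∧
    Phi Q 0 = 0 := by
  have hsub : ∀ x ∈ Ici (0 : ℝ), ∀ y ∈ Ici (0 : ℝ),
      hQ.multiplier x * (y - x) ≤ Phi Q y - Phi Q x :=
    fun x hx y hy => hQ.multiplier_mul_sub_le_Phi_sub hx hy
  refine ⟨⟨hQ.multiplier, fun r hr => ?_, hQ.multiplier.continuous.continuousOn,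
    hQ.multiplier_zero⟩, ?_, hQ.Phi_zero⟩
  · exact hasDerivWithinAt_of_subgradient hsub hr hQ.multiplier.continuous.continuousWithinAt
  · exact (hQ.multiplier.strictMono.strictMonoOn _).strictConvexOn_of_subgradient (convex_Ici 0)
      hsub
end
end

section
/- Let k > 0 and n = k + 3/2. If Q(f) = C f^{1+1/k} for all f ≥ 0 with some constant C > 0, then there is a constant C' > 0 such that Φ(ρ) = C' ρ^{1+1/n} for all ρ ≥ 0. -/
/-! The power law makes `Φ` homogeneous. The dilation `g ↦ a^{2k} g(·/a)` maps `G_r` onto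
`G_{a^{2k+3} r}` and multiplies `∫ (½|v|² g + Q(g))` by `a^{2k+5}`, so
`Φ(ρ) = ρ^{(2k+5)/(2k+3)} Φ(1) = ρ^{1+1/n} Φ(1)`. And `Φ(1) > 0`: since `g ≤ 1 + g^{1+1/k}`, the mass
inside a ball of volume `1/2` is at most `1/2` plus a multiple of the Casimir, while the mass
outside it is bounded by a multiple of the kinetic energy. -/

open MeasureTheory Real Filter Topology

noncomputable section

open Metric Pointwise

def IsPowerLaw (Q : ℝ → ℝ) (C p : ℝ) : Prop := ∀ x, 0 ≤ x → Q x = C * x ^ p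

namespace IsPowerLaw

variable {Q : ℝ → ℝ} {C p : ℝ}

lemma map_zero (hQ : IsPowerLaw Q C p) (hp : p ≠ 0) : Q 0 = 0 := by
  rw [hQ 0 le_rfl, zero_rpow hp, mul_zero]

lemma nonneg (hQ : IsPowerLaw Q C p) (hC : 0 ≤ C) {x : ℝ} (hx : 0 ≤ x) : 0 ≤ Q x := by
  rw [hQ x hx]; positivity

end IsPowerLaw

variable {Q : ℝ → ℝ} {k C : ℝ}

lemma kinQint_nonneg (hQ : ∀ x, 0 ≤ x → 0 ≤ Q x) {g : Space → ℝ} (hg : ∀ v, 0 ≤ g v) :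
    0 ≤ kinQint Q g :=
  integral_nonneg fun v => add_nonneg (by have := hg v; positivity) (hQ _ (hg v))

lemma Phi_zero (hQ0 : Q 0 = 0) (hQ : ∀ x, 0 ≤ x → 0 ≤ Q x) : Phi Q 0 = 0 := by
  have hzero : (0 : Space → ℝ) ∈ Gset Q 0 :=
    ⟨fun _ => le_rfl, integrable_zero _ _ _, by simp [hQ0], integral_zero _ _⟩
  refine IsLeast.csInf_eq ⟨⟨0, hzero, by simp [kinQint, hQ0]⟩, ?_⟩
  rintro _ ⟨g, hg, rfl⟩
  exact kinQint_nonneg hQ hg.1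

lemma Gset_nonempty (hQ0 : Q 0 = 0) {r : ℝ} (hr : 0 ≤ r) : (Gset Q r).Nonempty := by
  set B := closedBall (0 : Space) 1
  have hBm : MeasurableSet B := measurableSet_closedBall
  have hB : 0 < volume.real B := ENNReal.toReal_pos (measure_closedBall_pos volume _ one_pos).ne'
    measure_closedBall_lt_top.ne
  set c := r / volume.real B
  have hdens : (fun v => 1/2 * ‖v‖^2 * B.indicator (fun _ => c) v
      + Q (B.indicator (fun _ => c) v)) = B.indicator fun v => 1/2 * ‖v‖^2 * c + Q c := by
    funext v
    by_cases hv : v ∈ B <;> simp [hv, hQ0]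
  refine ⟨B.indicator fun _ => c, Set.indicator_nonneg fun _ _ => by positivity, ?_, ?_, ?_⟩
  · exact (integrable_indicator_iff hBm).2 (integrableOn_const measure_closedBall_lt_top.ne)
  · rw [hdens, integrable_indicator_iff hBm]
    exact (Continuous.continuousOn (by fun_prop)).integrableOn_compact (isCompact_closedBall _ _)
  · rw [integral_indicator_const _ hBm, smul_eq_mul, mul_div_cancel₀ _ hB.ne']

def velocityDilation (k a : ℝ) (g : Space → ℝ) : Space → ℝ := fun v => a ^ (2 * k) * g (a⁻¹ • v)

lemma velocityDilation_velocityDilation_inv {a : ℝ} (ha : 0 < a) (g : Space → ℝ) :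
    velocityDilation k a (velocityDilation k a⁻¹ g) = g := by
  funext v
  simp only [velocityDilation, inv_inv, smul_smul, mul_inv_cancel₀ ha.ne', one_smul,
    inv_rpow ha.le, mul_inv_cancel_left₀ (rpow_pos_of_pos ha _).ne']

lemma integral_comp_inv_smul_space (f : Space → ℝ) {a : ℝ} (ha : 0 ≤ a) :
    ∫ v, f (a⁻¹ • v) = a ^ 3 * ∫ v, f v := by
  rw [Measure.integral_comp_inv_smul_of_nonneg volume f ha, finrank_euclideanSpace_fin,
    smul_eq_mul]

lemma energyDensity_velocityDilation (hk : k ≠ 0) (hQ : IsPowerLaw Q C (1 + 1/k)) {a : ℝ}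
    (ha : 0 < a) {g : Space → ℝ} (hg : ∀ v, 0 ≤ g v) (v : Space) :
    1/2 * ‖v‖^2 * velocityDilation k a g v + Q (velocityDilation k a g v)
      = a ^ (2*k + 2) * (1/2 * ‖a⁻¹ • v‖^2 * g (a⁻¹ • v) + Q (g (a⁻¹ • v))) := by
  have hpow : (a ^ (2*k)) ^ (1 + 1/k) = a ^ (2*k + 2) := by
    rw [← rpow_mul ha.le]; congr 1; field_simp
  have h2 : a ^ (2*k + 2) = a ^ (2*k) * a ^ 2 := by exact_mod_cast rpow_add_natCast ha.ne' (2*k) 2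
  have hg' := hg (a⁻¹ • v)
  simp only [velocityDilation]
  rw [hQ _ (by positivity), hQ _ hg', mul_rpow (by positivity) hg', hpow, h2, norm_smul,
    norm_inv, norm_of_nonneg ha.le]
  field_simp

lemma velocityDilation_mem_Gset (hk : k ≠ 0) (hQ : IsPowerLaw Q C (1 + 1/k)) {a m : ℝ}
    (ha : 0 < a) {g : Space → ℝ} (hg : g ∈ Gset Q m) :
    velocityDilation k a g ∈ Gset Q (a ^ (2*k + 3) * m) := by
  obtain ⟨hg0, hgi, hgE, hgm⟩ := hg
  have ha' : a⁻¹ ≠ 0 := inv_ne_zero ha.ne'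
  refine ⟨fun v => mul_nonneg (by positivity) (hg0 _), ?_, ?_, ?_⟩
  · exact ((integrable_comp_smul_iff volume g ha').2 hgi).const_mul _
  · simp only [energyDensity_velocityDilation hk hQ ha hg0]
    exact ((integrable_comp_smul_iff volume
      (fun v => 1/2 * ‖v‖^2 * g v + Q (g v)) ha').2 hgE).const_mul _
  · simp only [velocityDilation]
    rw [integral_const_mul, integral_comp_inv_smul_space g ha.le, hgm, ← mul_assoc,
      ← rpow_natCast, ← rpow_add ha]
    norm_num

lemma kinQint_velocityDilation (hk : k ≠ 0) (hQ : IsPowerLaw Q C (1 + 1/k)) {a : ℝ}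
    (ha : 0 < a) {g : Space → ℝ} (hg : ∀ v, 0 ≤ g v) :
    kinQint Q (velocityDilation k a g) = a ^ (2*k + 5) * kinQint Q g := by
  simp only [kinQint, energyDensity_velocityDilation hk hQ ha hg]
  rw [integral_const_mul, integral_comp_inv_smul_space (fun v => 1/2 * ‖v‖^2 * g v + Q (g v))
    ha.le, ← mul_assoc, ← rpow_natCast, ← rpow_add ha]
  congr 2
  ring

lemma image_kinQint_Gset_rpow_mul (hk : k ≠ 0) (hQ : IsPowerLaw Q C (1 + 1/k)) {a : ℝ}
    (ha : 0 < a) (m : ℝ) :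
    kinQint Q '' Gset Q (a ^ (2*k + 3) * m) = a ^ (2*k + 5) • kinQint Q '' Gset Q m := by
  ext y
  constructor
  · rintro ⟨f, hf, rfl⟩
    have hmass : (a⁻¹) ^ (2*k + 3) * (a ^ (2*k + 3) * m) = m := by
      rw [inv_rpow ha.le, inv_mul_cancel_left₀ (rpow_pos_of_pos ha _).ne']
    have hg := velocityDilation_mem_Gset hk hQ (inv_pos.2 ha) hf
    rw [hmass] at hg
    refine ⟨_, ⟨_, hg, rfl⟩, ?_⟩
    dsimp only
    rw [smul_eq_mul, ← kinQint_velocityDilation hk hQ ha hg.1,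
      velocityDilation_velocityDilation_inv ha]
  · rintro ⟨_, ⟨g, hg, rfl⟩, rfl⟩
    exact ⟨_, velocityDilation_mem_Gset hk hQ ha hg, kinQint_velocityDilation hk hQ ha hg.1⟩

lemma Phi_rpow_mul (hk : k ≠ 0) (hQ : IsPowerLaw Q C (1 + 1/k)) {a : ℝ} (ha : 0 < a)
    (m : ℝ) : Phi Q (a ^ (2*k + 3) * m) = a ^ (2*k + 5) * Phi Q m := by
  rw [Phi, image_kinQint_Gset_rpow_mul hk hQ ha, sInf_smul_of_nonneg (by positivity),
    smul_eq_mul, Phi]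

lemma Phi_eq_rpow_mul_Phi_one (hk : 0 < k) (hQ : IsPowerLaw Q C (1 + 1/k)) {ρ : ℝ}
    (hρ : 0 < ρ) : Phi Q ρ = ρ ^ ((2*k + 5) / (2*k + 3)) * Phi Q 1 := by
  have h3 : 2*k + 3 ≠ 0 := by positivity
  obtain ⟨a, ha, rfl⟩ : ∃ a > 0, a ^ (2*k + 3) = ρ :=
    ⟨ρ ^ (2*k + 3)⁻¹, by positivity, by rw [← rpow_mul hρ.le, inv_mul_cancel₀ h3, rpow_one]⟩
  simpa only [mul_one, ← rpow_mul ha.le, mul_div_cancel₀ _ h3] using Phi_rpow_mul hk.ne' hQ ha 1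

lemma exists_volume_closedBall_le {ε : ℝ} (hε : 0 < ε) :
    ∃ R > 0, volume.real (closedBall (0 : Space) R) ≤ ε := by
  set V := volume.real (closedBall (0 : Space) 1)
  have hV : 0 ≤ V := measureReal_nonneg
  refine ⟨ε / (V + ε), by positivity, ?_⟩
  have hR1 : ε / (V + ε) ≤ 1 := div_le_one_of_le₀ (by linarith) (by positivity)
  rw [Measure.addHaar_real_closedBall' volume _ (by positivity), finrank_euclideanSpace_fin]
  calc (ε / (V + ε)) ^ 3 * V ≤ ε / (V + ε) * V := by
        gcongr; exact pow_le_of_le_one (by positivity) hR1 (by norm_num)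
    _ ≤ ε := by rw [div_mul_eq_mul_div, div_le_iff₀ (by positivity)]; nlinarith

lemma self_le_one_add_rpow {x p : ℝ} (hx : 0 ≤ x) (hp : 1 ≤ p) : x ≤ 1 + x ^ p := by
  rcases le_total x 1 with h | h
  · linarith [rpow_nonneg hx p]
  · linarith [self_le_rpow_of_one_le h hp]

lemma le_indicator_add_mul_energyDensity (hk : 0 ≤ k) (hC : 0 < C)
    (hQ : IsPowerLaw Q C (1 + 1/k)) {R x : ℝ} (hR : 0 < R) (hx : 0 ≤ x) (v : Space) :
    x ≤ (closedBall 0 R).indicator 1 v + (C⁻¹ + 2 / R^2) * (1/2 * ‖v‖^2 * x + Q x) := by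
  have hkin : 0 ≤ 1/2 * ‖v‖^2 * x := by positivity
  have hQx : 0 ≤ Q x := hQ.nonneg hC.le hx
  by_cases hv : v ∈ closedBall 0 R
  · have hcas : x ≤ 1 + C⁻¹ * Q x := by
      rw [hQ x hx, inv_mul_cancel_left₀ hC.ne']
      exact self_le_one_add_rpow hx (by simpa using hk)
    rw [Set.indicator_of_mem hv, Pi.one_apply]
    nlinarith [mul_nonneg (by positivity : (0:ℝ) ≤ 2 / R^2) (add_nonneg hkin hQx),
      mul_nonneg (inv_nonneg.2 hC.le) hkin]
  · have hvR : R ≤ ‖v‖ := by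
      rw [mem_closedBall, dist_zero_right, not_le] at hv
      exact hv.le
    have hkin' : x ≤ 2 / R^2 * (1/2 * ‖v‖^2 * x) := by
      rw [div_mul_eq_mul_div, le_div_iff₀ (by positivity)]
      nlinarith [mul_le_mul_of_nonneg_right (pow_le_pow_left₀ hR.le hvR 2) hx]
    rw [Set.indicator_of_notMem hv]
    nlinarith [mul_nonneg (by positivity : (0:ℝ) ≤ 2 / R^2) hQx,
      mul_nonneg (inv_nonneg.2 hC.le) (add_nonneg hkin hQx)]

lemma le_volume_closedBall_add_mul_kinQint (hk : 0 ≤ k) (hC : 0 < C)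
    (hQ : IsPowerLaw Q C (1 + 1/k)) {R m : ℝ} (hR : 0 < R) {g : Space → ℝ} (hg : g ∈ Gset Q m) :
    m ≤ volume.real (closedBall (0 : Space) R) + (C⁻¹ + 2 / R^2) * kinQint Q g := by
  obtain ⟨hg0, hgi, hgE, rfl⟩ := hg
  have hball : Integrable ((closedBall (0 : Space) R).indicator 1) :=
    (integrable_indicator_iff measurableSet_closedBall).2
      (integrableOn_const (C := (1 : ℝ)) measure_closedBall_lt_top.ne)
  calc ∫ v, g v
      ≤ ∫ v, ((closedBall 0 R).indicator 1 v
          + (C⁻¹ + 2 / R^2) * (1/2 * ‖v‖^2 * g v + Q (g v))) :=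
        integral_mono hgi (hball.add (hgE.const_mul _))
          fun v => le_indicator_add_mul_energyDensity hk hC hQ hR (hg0 v) v
    _ = _ := by
      rw [integral_add hball (hgE.const_mul _), integral_indicator_one measurableSet_closedBall,
        integral_const_mul, kinQint]

lemma Phi_one_pos (hk : 0 ≤ k) (hC : 0 < C) (hQ : IsPowerLaw Q C (1 + 1/k)) :
    0 < Phi Q 1 := by
  obtain ⟨R, hR, hvol⟩ := exists_volume_closedBall_le (by norm_num : (0:ℝ) < 1/2)
  set K := C⁻¹ + 2 / R^2
  have hK : 0 < K := by positivity
  have hne : (kinQint Q '' Gset Q 1).Nonempty :=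
    (Gset_nonempty (hQ.map_zero (by positivity)) zero_le_one).image _
  refine (by positivity : (0:ℝ) < 1 / (2 * K)).trans_le (le_csInf hne ?_)
  rintro _ ⟨g, hg, rfl⟩
  have hmass := le_volume_closedBall_add_mul_kinQint hk hC hQ hR hg
  rw [div_le_iff₀ (by positivity)]
  nlinarith

theorem Phi_of_powerLaw_general (Q : ℝ → ℝ)
    (k n : ℝ) (hk : 0 < k) (hn : n = k + 3/2)
    (C : ℝ) (hC : 0 < C) (hQeq : ∀ f : ℝ, 0 ≤ f → Q f = C * f ^ (1 + 1/k)) :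
    ∃ C' > (0:ℝ), ∀ ρ : ℝ, 0 ≤ ρ → Phi Q ρ = C' * ρ ^ (1 + 1/n) := by
  have hQ : IsPowerLaw Q C (1 + 1/k) := hQeq
  have hexp : 1 + 1/n = (2*k + 5) / (2*k + 3) := by
    subst hn; field_simp; ring
  rw [hexp]
  refine ⟨Phi Q 1, Phi_one_pos hk.le hC hQ, fun ρ hρ => ?_⟩
  rcases hρ.eq_or_lt with rfl | hρ
  · rw [Phi_zero (hQ.map_zero (by positivity)) fun _ => hQ.nonneg hC.le,
      zero_rpow (by positivity), mul_zero]
  · rw [Phi_eq_rpow_mul_Phi_one hk hQ hρ, mul_comm]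

/-- If `Q(f) = C f^{1+1/k}` for all `f ≥ 0` (with `k > 0`, `C > 0`),
then `Φ(ρ) = C' ρ^{1+1/n}` for all `ρ ≥ 0`, where `n = k + 3/2`. -/
theorem Phi_of_powerLaw (Q Q' : ℝ → ℝ) (hQ : QHyp Q Q')
    (k n : ℝ) (hk : 0 < k) (hn : n = k + 3/2)
    (C : ℝ) (hC : 0 < C) (hQeq : ∀ f : ℝ, 0 ≤ f → Q f = C * f ^ (1 + 1/k)) :
    ∃ C' > (0:ℝ), ∀ ρ : ℝ, 0 ≤ ρ → Phi Q ρ = C' * ρ ^ (1 + 1/n) :=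
  Phi_of_powerLaw_general Q k n hk hn C hC hQeq
end
end

section
/- Let k > 0 and n = k + 3/2. If there are constants C > 0 and f₁ > 0 with Q(f) ≤ C f^{1+1/k} for all 0 ≤ f ≤ f₁, then there are constants C' > 0 and ρ₁ > 0 such that Φ(ρ) ≤ C' ρ^{1+1/n} for all 0 ≤ ρ ≤ ρ₁. If the bound on Q holds for all f ≥ 0, then the bound on Φ holds for all ρ ≥ 0. -/
/-!
Test `Φ(ρ)` against `g = c · 1_{B_R}`, a constant on a ball: it has mass `c R³ |B₁|` and costs
at most `(R² c / 2 + Q(c)) R³ |B₁|`. Balancing kinetic and Casimir parts, take `R² = ρ^{1/n}` and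
`c = ρ^{k/n} / |B₁|`; then `c ≤ f₁` for small `ρ`, and `Q(c) ≤ C c · c^{1/k} = C c ρ^{1/n} |B₁|^{-1/k}`,
so both parts are of order `ρ^{1+1/n}`.
-/

open MeasureTheory Real Filter Topology

noncomputable section

open Metric

theorem QHyp.nonneg {Q Q' : ℝ → ℝ} (hQ : QHyp Q Q') {f : ℝ} (hf : 0 ≤ f) : 0 ≤ Q f := by
  rcases hf.eq_or_lt with rfl | hf
  · exact hQ.zero.ge
  have h := hQ.strictConvex.convexOn.le_slope_of_hasDerivWithinAt Set.self_mem_Ici hf.le hf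
    (hQ.hasDeriv 0 Set.self_mem_Ici)
  rwa [hQ.derivZero, slope_def_field, hQ.zero, sub_zero, sub_zero, le_div_iff₀ hf, zero_mul] at h

theorem Phi_le_kinQint {Q : ℝ → ℝ} (hQ : ∀ f, 0 ≤ f → 0 ≤ Q f) {r : ℝ} {g : Space → ℝ}
    (hg : g ∈ Gset Q r) : Phi Q r ≤ kinQint Q g := by
  refine csInf_le ⟨0, ?_⟩ (Set.mem_image_of_mem _ hg)
  rintro _ ⟨h, hh, rfl⟩
  exact integral_nonneg fun v => add_nonneg (by have := hh.1 v; positivity) (hQ _ (hh.1 v))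

def unitBallVolume : ℝ := volume.real (closedBall (0 : Space) 1)

theorem unitBallVolume_pos : 0 < unitBallVolume :=
  ENNReal.toReal_pos (measure_closedBall_pos volume _ one_pos).ne' measure_closedBall_lt_top.ne

theorem volume_real_closedBall_space {R : ℝ} (hR : 0 ≤ R) :
    volume.real (closedBall (0 : Space) R) = R ^ 3 * unitBallVolume := by
  rw [Measure.addHaar_real_closedBall' volume 0 hR, finrank_euclideanSpace_fin, unitBallVolume]

section BallTestFunction

variable {Q : ℝ → ℝ} {R c : ℝ}

theorem kinQint_integrand_indicator (hQ0 : Q 0 = 0) :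
    (fun v : Space => (1/2) * ‖v‖^2 * (closedBall 0 R).indicator (fun _ => c) v
        + Q ((closedBall 0 R).indicator (fun _ => c) v))
      = (closedBall 0 R).indicator (fun v => (1/2) * ‖v‖^2 * c + Q c) := by
  funext v
  by_cases hv : v ∈ closedBall (0 : Space) R <;> simp [hv, hQ0]

theorem integrableOn_kinQint_integrand_closedBall :
    IntegrableOn (fun v : Space => (1/2) * ‖v‖^2 * c + Q c) (closedBall 0 R) :=
  (by fun_prop : Continuous fun v : Space => (1/2) * ‖v‖^2 * c + Q c).continuousOn
    |>.integrableOn_compact (isCompact_closedBall _ _)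

theorem indicator_closedBall_mem_Gset (hQ0 : Q 0 = 0) (hR : 0 ≤ R) (hc : 0 ≤ c) :
    (closedBall 0 R).indicator (fun _ => c) ∈ Gset Q (c * (R ^ 3 * unitBallVolume)) := by
  refine ⟨fun v => Set.indicator_apply_nonneg fun _ => hc, ?_, ?_, ?_⟩
  · exact (integrable_indicator_iff measurableSet_closedBall).2
      (integrableOn_const measure_closedBall_lt_top.ne)
  · rw [kinQint_integrand_indicator hQ0, integrable_indicator_iff measurableSet_closedBall]
    exact integrableOn_kinQint_integrand_closedBall
  · rw [integral_indicator_const c measurableSet_closedBall, smul_eq_mul,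
      volume_real_closedBall_space hR, mul_comm]

theorem kinQint_indicator_closedBall_le (hQ0 : Q 0 = 0) (hR : 0 ≤ R) (hc : 0 ≤ c) :
    kinQint Q ((closedBall 0 R).indicator (fun _ => c))
      ≤ ((1/2) * R^2 * c + Q c) * (R ^ 3 * unitBallVolume) := by
  rw [kinQint, kinQint_integrand_indicator hQ0, integral_indicator measurableSet_closedBall]
  calc ∫ v in closedBall (0 : Space) R, ((1/2) * ‖v‖^2 * c + Q c)
      ≤ ∫ _ in closedBall (0 : Space) R, ((1/2) * R^2 * c + Q c) := by
        refine setIntegral_mono_on integrableOn_kinQint_integrand_closedBall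
          (integrableOn_const measure_closedBall_lt_top.ne) measurableSet_closedBall
          fun v hv => ?_
        have hvR : ‖v‖ ≤ R := by simpa using hv
        have : ‖v‖^2 ≤ R^2 := pow_le_pow_left₀ (norm_nonneg v) hvR 2
        gcongr
    _ = ((1/2) * R^2 * c + Q c) * (R ^ 3 * unitBallVolume) := by
        rw [setIntegral_const, smul_eq_mul, volume_real_closedBall_space hR, mul_comm]

theorem Phi_le_of_closedBall (hQ : ∀ f, 0 ≤ f → 0 ≤ Q f) (hQ0 : Q 0 = 0) (hR : 0 ≤ R)
    (hc : 0 ≤ c) :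
    Phi Q (c * (R ^ 3 * unitBallVolume)) ≤ ((1/2) * R^2 * c + Q c) * (R ^ 3 * unitBallVolume) :=
  (Phi_le_kinQint hQ (indicator_closedBall_mem_Gset hQ0 hR hc)).trans
    (kinQint_indicator_closedBall_le hQ0 hR hc)

end BallTestFunction

theorem Phi_le_rpow_of_Q_le {Q : ℝ → ℝ} (hQ : ∀ f, 0 ≤ f → 0 ≤ Q f) (hQ0 : Q 0 = 0)
    {k n C ρ : ℝ} (hk : 0 < k) (hn : n = k + 3/2) (hρ : 0 ≤ ρ)
    (hQc : Q (ρ ^ (k/n) / unitBallVolume) ≤ C * (ρ ^ (k/n) / unitBallVolume) ^ (1 + 1/k)) :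
    Phi Q ρ ≤ (1/2 + C * unitBallVolume ^ (-(1/k))) * ρ ^ (1 + 1/n) := by
  have hn0 : 0 < n := by linarith
  have hV := unitBallVolume_pos
  set R := ρ ^ (1/(2*n))
  set c := ρ ^ (k/n) / unitBallVolume
  have hc : 0 ≤ c := by positivity
  have hR2 : R ^ 2 = ρ ^ (1/n) := by
    rw [← rpow_natCast, ← rpow_mul hρ]; congr 1; field_simp; norm_num
  have hmass : c * (R ^ 3 * unitBallVolume) = ρ := by
    have hR3 : R ^ 3 = ρ ^ (3/(2*n)) := by
      rw [← rpow_natCast, ← rpow_mul hρ]; congr 1; field_simp; norm_num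
    have hexp : k/n + 3/(2*n) = 1 := by field_simp; linarith
    calc c * (R ^ 3 * unitBallVolume)
        = ρ ^ (k/n) * ρ ^ (3/(2*n)) := by rw [hR3]; simp only [c]; field_simp
      _ = ρ := by rw [← rpow_add' hρ (by rw [hexp]; exact one_ne_zero), hexp, rpow_one]
  have hc1k : c ^ (1/k) = ρ ^ (1/n) * unitBallVolume ^ (-(1/k)) := by
    rw [div_rpow (by positivity) hV.le, ← rpow_mul hρ, rpow_neg hV.le, div_eq_mul_inv,
      show k/n * (1/k) = 1/n by field_simp]
  calc Phi Q ρ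
      = Phi Q (c * (R ^ 3 * unitBallVolume)) := by rw [hmass]
    _ ≤ ((1/2) * R^2 * c + Q c) * (R ^ 3 * unitBallVolume) :=
        Phi_le_of_closedBall hQ hQ0 (by positivity) hc
    _ ≤ ((1/2) * R^2 * c + C * (c * c ^ (1/k))) * (R ^ 3 * unitBallVolume) := by
        rw [← rpow_one_add' hc (by positivity)]; gcongr
    _ = (1/2 + C * unitBallVolume ^ (-(1/k))) * (ρ * ρ ^ (1/n)) := by
        rw [hc1k, hR2, ← hmass]; ring
    _ = (1/2 + C * unitBallVolume ^ (-(1/k))) * ρ ^ (1 + 1/n) := by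
        rw [rpow_one_add' hρ (by positivity)]

/-- If `Q(f) ≤ C f^{1+1/k}` for all small `f ≥ 0` (with `k > 0`, `C > 0`),
then `Φ(ρ) ≤ C' ρ^{1+1/n}` for all small `ρ ≥ 0`, where `n = k + 3/2`; if the bound on `Q`
holds for all `f ≥ 0`, then the bound on `Φ` holds for all `ρ ≥ 0`. -/
theorem Phi_upper_bound (Q Q' : ℝ → ℝ) (hQ : QHyp Q Q')
    (k n : ℝ) (hk : 0 < k) (hn : n = k + 3/2)
    (C f₁ : ℝ) (hC : 0 < C) (hf₁ : 0 < f₁)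
    (hQle : ∀ f : ℝ, 0 ≤ f → f ≤ f₁ → Q f ≤ C * f ^ (1 + 1/k)) :
    (∃ C' > (0:ℝ), ∃ ρ₁ > (0:ℝ), ∀ ρ : ℝ, 0 ≤ ρ → ρ ≤ ρ₁ → Phi Q ρ ≤ C' * ρ ^ (1 + 1/n)) ∧
    ((∀ f : ℝ, 0 ≤ f → Q f ≤ C * f ^ (1 + 1/k)) →
      ∃ C' > (0:ℝ), ∀ ρ : ℝ, 0 ≤ ρ → Phi Q ρ ≤ C' * ρ ^ (1 + 1/n)) := by
  have hV := unitBallVolume_pos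
  have hkn : 0 < k / n := by rw [hn]; positivity
  have hC' : 0 < 1/2 + C * unitBallVolume ^ (-(1/k)) := by positivity
  have hbound := fun ρ (hρ : 0 ≤ ρ) =>
    Phi_le_rpow_of_Q_le (C := C) (fun _ => hQ.nonneg) hQ.zero hk hn hρ
  refine ⟨⟨_, hC', (f₁ * unitBallVolume) ^ (k/n)⁻¹, by positivity, fun ρ hρ hρ₁ => ?_⟩,
    fun hQall => ⟨_, hC', fun ρ hρ => hbound ρ hρ (hQall _ (by positivity))⟩⟩
  refine hbound ρ hρ (hQle _ (by positivity) ?_)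
  rw [div_le_iff₀ hV, ← le_rpow_inv_iff_of_pos hρ (by positivity) hkn]
  exact hρ₁
end
end
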